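/- Let C > 0 and u₀ ∈ (0, π/2]. Then lim_{x→0⁺} (1/x) · ∫∫_{(0,C)×(0,u₀)} r · 1{ r·sin(u) < x } dr du = C, where the integral is with respect to two-dimensional Lebesgue measure. -/

import Mathlib

open MeasureTheory Filter
open scoped Real Topology

-- integrability helper
lemma stmt14_integrableOn_aux (C u₀ : ℝ) {S : Set (ℝ × ℝ)}
    (hS : MeasurableSet S) {v : ℝ × ℝ → ℝ} (hv : Measurable v) {M : ℝ}
    (hM : ∀ p ∈ Set.Ioo (0:ℝ) C ×ˢ Set.Ioo (0:ℝ) u₀, ‖v p‖ ≤ M) :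
    IntegrableOn (S.indicator v) (Set.Ioo 0 C ×ˢ Set.Ioo 0 u₀) := by
  have hM0 : 0 ≤ M ∨ Set.Ioo (0:ℝ) C ×ˢ Set.Ioo (0:ℝ) u₀ = ∅ := by
    rcases Set.eq_empty_or_nonempty (Set.Ioo (0:ℝ) C ×ˢ Set.Ioo (0:ℝ) u₀) with h | ⟨p, hp⟩
    · exact Or.inr h
    · exact Or.inl ((norm_nonneg _).trans (hM p hp))
  have hbox : MeasurableSet (Set.Ioo (0:ℝ) C ×ˢ Set.Ioo (0:ℝ) u₀) :=
    measurableSet_Ioo.prod measurableSet_Ioo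
  apply Measure.integrableOn_of_bounded (M := max M 0)
  · exact (((Metric.isBounded_Ioo (0:ℝ) C).prod
      (Metric.isBounded_Ioo (0:ℝ) u₀)).measure_lt_top).ne
  · exact (hv.indicator hS).aestronglyMeasurable
  · refine (ae_restrict_iff' hbox).2 (Filter.Eventually.of_forall fun p hp => ?_)
    by_cases h : p ∈ S
    · rw [Set.indicator_of_mem h]
      exact le_max_of_le_left (hM p hp)
    · rw [Set.indicator_of_notMem h]
      simp

-- exact computation for the linear-in-u comparison integrals
lemma stmt14_compF (C u₀ a x : ℝ) (hC : 0 < C) (hu : 0 < u₀) (ha : 0 < a)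
    (hx : 0 < x) (hxs : x < a * u₀ * C) :
    ∫ p in Set.Ioo 0 C ×ˢ Set.Ioo 0 u₀,
        (if a * (p.1 * p.2) < x then p.1 else 0)
      = x * C / a - x ^ 2 / (2 * a ^ 2 * u₀) := by
  have hmS : MeasurableSet {p : ℝ × ℝ | a * (p.1 * p.2) < x} :=
    measurableSet_lt (by fun_prop) measurable_const
  have hfeq : (fun p : ℝ × ℝ => if a * (p.1 * p.2) < x then p.1 else 0)
      = Set.indicator {p : ℝ × ℝ | a * (p.1 * p.2) < x} (fun p => p.1) := by
    ext p
    by_cases h : a * (p.1 * p.2) < x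
    · rw [if_pos h]
      exact (Set.indicator_of_mem (show p ∈ {p : ℝ × ℝ | a * (p.1 * p.2) < x} from h) _).symm
    · rw [if_neg h]
      exact (Set.indicator_of_notMem (show p ∉ {p : ℝ × ℝ | a * (p.1 * p.2) < x} from h) _).symm
  have hint : IntegrableOn
      (Set.indicator {p : ℝ × ℝ | a * (p.1 * p.2) < x} (fun p : ℝ × ℝ => p.1))
      (Set.Ioo 0 C ×ˢ Set.Ioo 0 u₀) :=
    stmt14_integrableOn_aux C u₀ hmS measurable_fst (M := C)
      (fun p hp => by
        rw [Real.norm_eq_abs, abs_of_pos hp.1.1]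
        exact (hp.1.2).le)
  rw [hfeq]
  rw [Measure.volume_eq_prod] at hint ⊢
  rw [setIntegral_prod _ hint]
  have hinner : ∀ r ∈ Set.Ioo (0:ℝ) C,
      (∫ u in Set.Ioo (0:ℝ) u₀,
        Set.indicator {p : ℝ × ℝ | a * (p.1 * p.2) < x} (fun p => p.1) (r, u))
      = min (r * u₀) (x / a) := by
    intro r hr
    have hr0 : 0 < r := hr.1
    have har : 0 < a * r := mul_pos ha hr0
    have hm0 : 0 < x / (a * r) := div_pos hx har
    have hset : ∀ u : ℝ, ((r, u) ∈ {p : ℝ × ℝ | a * (p.1 * p.2) < x})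
        ↔ u ∈ Set.Iio (x / (a * r)) := by
      intro u
      simp only [Set.mem_setOf_eq, Set.mem_Iio]
      rw [show a * (r * u) = u * (a * r) by ring, ← lt_div_iff₀ har]
    have heq : (fun u : ℝ =>
        Set.indicator {p : ℝ × ℝ | a * (p.1 * p.2) < x} (fun p => p.1) (r, u))
        = Set.indicator (Set.Iio (x / (a * r))) (fun _ => r) := by
      ext u
      by_cases h : u ∈ Set.Iio (x / (a * r))
      · rw [Set.indicator_of_mem ((hset u).2 h), Set.indicator_of_mem h]
      · rw [Set.indicator_of_notMem (fun hh => h ((hset u).1 hh)),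
          Set.indicator_of_notMem h]
    rw [heq, setIntegral_indicator measurableSet_Iio, setIntegral_const,
      Set.Ioo_inter_Iio, Real.volume_real_Ioo_of_le (le_min hu.le hm0.le), smul_eq_mul, sub_zero]
    rw [min_mul_of_nonneg _ _ hr0.le]
    congr 1
    · ring
    · field_simp
  rw [setIntegral_congr_fun measurableSet_Ioo hinner]
  set t : ℝ := x / (a * u₀) with ht
  have hau : 0 < a * u₀ := mul_pos ha hu
  have ht0 : 0 < t := div_pos hx hau
  have htC : t < C := (div_lt_iff₀ hau).2 (by nlinarith)
  have htu : t * u₀ = x / a := by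
    rw [ht]; field_simp
  have hcont : Continuous fun r : ℝ => min (r * u₀) (x / a) :=
    (continuous_id.mul continuous_const).min continuous_const
  have hIoo : ∫ r in Set.Ioo (0:ℝ) C, min (r * u₀) (x / a)
      = ∫ r in (0:ℝ)..C, min (r * u₀) (x / a) := by
    rw [intervalIntegral.integral_of_le hC.le, integral_Ioc_eq_integral_Ioo]
  have hsplit := intervalIntegral.integral_add_adjacent_intervals
    (μ := volume) (a := (0:ℝ)) (b := t) (c := C)
    (hcont.intervalIntegrable _ _) (hcont.intervalIntegrable _ _)
  have h1 : ∫ r in (0:ℝ)..t, min (r * u₀) (x / a) = t ^ 2 / 2 * u₀ := by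
    rw [intervalIntegral.integral_congr (g := fun r => r * u₀)
      (fun r hr => by
        rw [Set.uIcc_of_le ht0.le] at hr
        exact min_eq_left (by nlinarith [hr.1, hr.2]))]
    rw [intervalIntegral.integral_mul_const, integral_id]
    ring
  have h2 : ∫ r in t..C, min (r * u₀) (x / a) = (C - t) * (x / a) := by
    rw [intervalIntegral.integral_congr (g := fun _ => x / a)
      (fun r hr => by
        rw [Set.uIcc_of_le htC.le] at hr
        exact min_eq_right (by nlinarith [hr.1, hr.2]))]
    rw [intervalIntegral.integral_const, smul_eq_mul]
  rw [hIoo, ← hsplit, h1, h2, ht]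
  field_simp
  ring

lemma stmt14_int_if (C u₀ : ℝ) {g : ℝ × ℝ → ℝ} (hg : Measurable g) (x : ℝ) :
    IntegrableOn (fun p : ℝ × ℝ => if g p < x then p.1 else 0)
      (Set.Ioo 0 C ×ˢ Set.Ioo 0 u₀) := by
  have hfeq : (fun p : ℝ × ℝ => if g p < x then p.1 else 0)
      = Set.indicator {p : ℝ × ℝ | g p < x} (fun p => p.1) := by
    ext p
    by_cases h : g p < x
    · rw [if_pos h]
      exact (Set.indicator_of_mem (show p ∈ {p : ℝ × ℝ | g p < x} from h) _).symm
    · rw [if_neg h]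
      exact (Set.indicator_of_notMem (show p ∉ {p : ℝ × ℝ | g p < x} from h) _).symm
  rw [hfeq]
  exact stmt14_integrableOn_aux C u₀ (measurableSet_lt hg measurable_const)
    measurable_fst (M := max C 0)
    (fun p hp => by
      rw [Real.norm_eq_abs, abs_of_pos hp.1.1]
      exact le_max_of_le_left hp.1.2.le)

lemma stmt14_compG (C u₀ s x : ℝ) (hC : 0 < C) (hu : 0 < u₀) (hs : 0 < s) (hx : 0 < x) :
    ∫ p in Set.Ioo 0 C ×ˢ Set.Ioo 0 u₀, (if p.1 * s < x then p.1 else 0)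
      ≤ u₀ * (x / s) ^ 2 := by
  have hxs0 : 0 < x / s := div_pos hx hs
  have hmB : MeasurableSet (Set.Ioo (0:ℝ) C ×ˢ Set.Ioo (0:ℝ) u₀) :=
    measurableSet_Ioo.prod measurableSet_Ioo
  have hm2 : MeasurableSet {p : ℝ × ℝ | p.1 < x / s} :=
    measurableSet_lt measurable_fst measurable_const
  have hint1 : IntegrableOn (fun p : ℝ × ℝ => if p.1 * s < x then p.1 else 0)
      (Set.Ioo 0 C ×ˢ Set.Ioo 0 u₀) :=
    stmt14_int_if C u₀ (measurable_fst.mul_const s) x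
  have hint2 : IntegrableOn (Set.indicator {p : ℝ × ℝ | p.1 < x / s} (fun _ => x / s))
      (Set.Ioo 0 C ×ˢ Set.Ioo 0 u₀) :=
    stmt14_integrableOn_aux C u₀ hm2 measurable_const (M := x / s)
      (fun p _ => by rw [Real.norm_eq_abs, abs_of_pos hxs0])
  have hmono : ∫ p in Set.Ioo 0 C ×ˢ Set.Ioo 0 u₀, (if p.1 * s < x then p.1 else 0)
      ≤ ∫ p in Set.Ioo 0 C ×ˢ Set.Ioo 0 u₀,
        Set.indicator {p : ℝ × ℝ | p.1 < x / s} (fun _ => x / s) p := by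
    apply setIntegral_mono_on hint1 hint2 hmB
    intro p _
    by_cases h : p.1 * s < x
    · have h1 : p.1 < x / s := (lt_div_iff₀ hs).2 h
      rw [if_pos h, Set.indicator_of_mem (show p ∈ {p : ℝ × ℝ | p.1 < x / s} from h1)]
      exact h1.le
    · rw [if_neg h]
      exact Set.indicator_nonneg (fun _ _ => hxs0.le) p
  refine hmono.trans ?_
  rw [setIntegral_indicator hm2, setIntegral_const, smul_eq_mul]
  have hsub : Set.Ioo (0:ℝ) C ×ˢ Set.Ioo (0:ℝ) u₀ ∩ {p : ℝ × ℝ | p.1 < x / s}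
      ⊆ Set.Ioo (0:ℝ) (x / s) ×ˢ Set.Ioo (0:ℝ) u₀ := by
    rintro ⟨r, u⟩ ⟨hp, hr⟩
    exact ⟨⟨hp.1.1, hr⟩, hp.2⟩
  have hvol : volume (Set.Ioo (0:ℝ) (x / s) ×ˢ Set.Ioo (0:ℝ) u₀)
      = ENNReal.ofReal (x / s) * ENNReal.ofReal u₀ := by
    rw [Measure.volume_eq_prod, Measure.prod_prod, Real.volume_Ioo, Real.volume_Ioo,
      sub_zero, sub_zero]
  have hle : (volume (Set.Ioo (0:ℝ) C ×ˢ Set.Ioo (0:ℝ) u₀ ∩ {p : ℝ × ℝ | p.1 < x / s})).toReal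
      ≤ (x / s) * u₀ := by
    have h1 := measure_mono (μ := volume) hsub
    have h2 : (volume (Set.Ioo (0:ℝ) (x / s) ×ˢ Set.Ioo (0:ℝ) u₀)).toReal
        = (x / s) * u₀ := by
      rw [hvol, ENNReal.toReal_mul, ENNReal.toReal_ofReal hxs0.le,
        ENNReal.toReal_ofReal hu.le]
    rw [← h2]
    have hne : volume (Set.Ioo (0:ℝ) (x / s) ×ˢ Set.Ioo (0:ℝ) u₀) ≠ ⊤ := by
      rw [hvol]
      exact ENNReal.mul_ne_top ENNReal.ofReal_ne_top ENNReal.ofReal_ne_top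
    exact ENNReal.toReal_mono hne h1
  calc (volume (Set.Ioo (0:ℝ) C ×ˢ Set.Ioo (0:ℝ) u₀ ∩ {p : ℝ × ℝ | p.1 < x / s})).toReal
        * (x / s)
      ≤ ((x / s) * u₀) * (x / s) := mul_le_mul_of_nonneg_right hle hxs0.le
    _ = u₀ * (x / s) ^ 2 := by ring

set_option maxHeartbeats 1000000 in
/-- Let `C > 0` and `u₀ ∈ (0, π/2]`. Then
`lim_{x→0⁺} (1/x)·∫∫_{(0,C)×(0,u₀)} r·1{r·sin u < x} dr du = C`,
with respect to two-dimensional Lebesgue measure. -/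
theorem stmt14 (C : ℝ) (hC : 0 < C) (u₀ : ℝ) (hu₀ : u₀ ∈ Set.Ioc 0 (π / 2)) :
    Tendsto (fun x : ℝ => x⁻¹ *
        ∫ p in Set.Ioo 0 C ×ˢ Set.Ioo 0 u₀,
          (if p.1 * Real.sin p.2 < x then p.1 else 0))
      (nhdsWithin 0 (Set.Ioi 0)) (𝓝 C) := by
  obtain ⟨hu, hu2⟩ := hu₀
  have hmB : MeasurableSet (Set.Ioo (0:ℝ) C ×ˢ Set.Ioo (0:ℝ) u₀) :=
    measurableSet_Ioo.prod measurableSet_Ioo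
  have hmain_int : ∀ x : ℝ,
      IntegrableOn (fun p : ℝ × ℝ => if p.1 * Real.sin p.2 < x then p.1 else 0)
        (Set.Ioo 0 C ×ˢ Set.Ioo 0 u₀) := fun x =>
    stmt14_int_if C u₀ (measurable_fst.mul (Real.measurable_sin.comp measurable_snd)) x
  rw [tendsto_order]
  constructor
  · -- lower bound
    intro b hb
    have hη0 : 0 < min (u₀ * C) (u₀ * (C - b)) :=
      lt_min (mul_pos hu hC) (mul_pos hu (sub_pos.2 hb))
    filter_upwards [Ioo_mem_nhdsGT_of_mem (Set.mem_Ico.2 ⟨le_refl (0:ℝ), hη0⟩)] with x hx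
    obtain ⟨hx0, hxη⟩ := hx
    have hxs : x < 1 * u₀ * C := by
      rw [one_mul]; exact hxη.trans_le (min_le_left _ _)
    have hlow := stmt14_compF C u₀ 1 x hC hu one_pos hx0 hxs
    have hint1 : IntegrableOn (fun p : ℝ × ℝ => if 1 * (p.1 * p.2) < x then p.1 else 0)
        (Set.Ioo 0 C ×ˢ Set.Ioo 0 u₀) :=
      stmt14_int_if C u₀ (by fun_prop) x
    have hle : (∫ p in Set.Ioo 0 C ×ˢ Set.Ioo 0 u₀, (if 1 * (p.1 * p.2) < x then p.1 else 0))
        ≤ ∫ p in Set.Ioo 0 C ×ˢ Set.Ioo 0 u₀, (if p.1 * Real.sin p.2 < x then p.1 else 0) := by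
      apply setIntegral_mono_on hint1 (hmain_int x) hmB
      intro p hp
      by_cases h : 1 * (p.1 * p.2) < x
      · have hsin : p.1 * Real.sin p.2 < x := by
          have h1 : Real.sin p.2 < p.2 := Real.sin_lt hp.2.1
          nlinarith [hp.1.1]
        rw [if_pos h, if_pos hsin]
      · rw [if_neg h]
        split
        · exact hp.1.1.le
        · exact le_refl 0
    have hxu : x < u₀ * (C - b) := hxη.trans_le (min_le_right _ _)
    have hkey : b < x⁻¹ * (x * C / 1 - x ^ 2 / (2 * 1 ^ 2 * u₀)) := by
      rw [show x⁻¹ * (x * C / 1 - x ^ 2 / (2 * 1 ^ 2 * u₀)) = C - x / (2 * u₀) by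
        field_simp]
      have : x / (2 * u₀) < C - b := by
        rw [div_lt_iff₀ (by positivity)]
        nlinarith
      linarith
    calc b < x⁻¹ * (x * C / 1 - x ^ 2 / (2 * 1 ^ 2 * u₀)) := hkey
      _ = x⁻¹ * ∫ p in Set.Ioo 0 C ×ˢ Set.Ioo 0 u₀,
            (if 1 * (p.1 * p.2) < x then p.1 else 0) := by rw [hlow]
      _ ≤ _ := mul_le_mul_of_nonneg_left hle (inv_nonneg.2 hx0.le)
  · -- upper bound
    intro b hb
    have hb0 : 0 < b := hC.trans hb
    obtain ⟨δ, hδ0, hδ1, hδb, hδπ⟩ :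
        ∃ δ : ℝ, 0 < δ ∧ δ ≤ 1 ∧ b * δ ^ 2 ≤ b - C ∧ δ < π := by
      have hbC : 0 < (b - C) / b := div_pos (sub_pos.2 hb) hb0
      refine ⟨min 1 (Real.sqrt ((b - C) / b)), lt_min one_pos (Real.sqrt_pos.2 hbC),
        min_le_left _ _, ?_, ?_⟩
      · have h1 : min 1 (Real.sqrt ((b - C) / b)) ≤ Real.sqrt ((b - C) / b) :=
          min_le_right _ _
        have h0 : 0 ≤ min 1 (Real.sqrt ((b - C) / b)) :=
          le_min zero_le_one (Real.sqrt_nonneg _)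
        have hsq : (min 1 (Real.sqrt ((b - C) / b))) ^ 2 ≤ (b - C) / b := by
          calc (min 1 (Real.sqrt ((b - C) / b))) ^ 2
              ≤ (Real.sqrt ((b - C) / b)) ^ 2 := by nlinarith [Real.sqrt_nonneg ((b - C) / b)]
            _ = (b - C) / b := Real.sq_sqrt hbC.le
        have h2 := (le_div_iff₀ hb0).1 hsq
        linarith
      · exact lt_of_le_of_lt (min_le_left _ _) (by linarith [Real.pi_gt_three])
    obtain ⟨c, hcδ, hc0, hcb⟩ : ∃ c : ℝ, c = 1 - δ ^ 2 / 4 ∧ 0 < c ∧ C / c < b := by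
      refine ⟨1 - δ ^ 2 / 4, rfl, by nlinarith, ?_⟩
      rw [div_lt_iff₀ (by nlinarith)]
      nlinarith
    obtain ⟨s, hsδ, hs0⟩ : ∃ s : ℝ, s = Real.sin δ ∧ 0 < s :=
      ⟨Real.sin δ, rfl, Real.sin_pos_of_pos_of_lt_pi hδ0 hδπ⟩
    have hη0 : 0 < min (c * u₀ * C) ((b - C / c) * s ^ 2 / u₀) :=
      lt_min (by positivity)
        (div_pos (mul_pos (sub_pos.2 hcb) (pow_pos hs0 2)) hu)
    filter_upwards [Ioo_mem_nhdsGT_of_mem (Set.mem_Ico.2 ⟨le_refl (0:ℝ), hη0⟩)] with x hx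
    obtain ⟨hx0, hxη⟩ := hx
    have hxs : x < c * u₀ * C := hxη.trans_le (min_le_left _ _)
    have hF1 := stmt14_compF C u₀ c x hC hu hc0 hx0 hxs
    have hF2 := stmt14_compG C u₀ s x hC hu hs0 hx0
    have hint1 : IntegrableOn (fun p : ℝ × ℝ => if c * (p.1 * p.2) < x then p.1 else 0)
        (Set.Ioo 0 C ×ˢ Set.Ioo 0 u₀) :=
      stmt14_int_if C u₀ (by fun_prop) x
    have hint2 : IntegrableOn (fun p : ℝ × ℝ => if p.1 * s < x then p.1 else 0)
        (Set.Ioo 0 C ×ˢ Set.Ioo 0 u₀) :=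
      stmt14_int_if C u₀ (measurable_fst.mul_const s) x
    have hpt : ∀ p ∈ Set.Ioo (0:ℝ) C ×ˢ Set.Ioo (0:ℝ) u₀,
        (if p.1 * Real.sin p.2 < x then p.1 else 0)
          ≤ (if c * (p.1 * p.2) < x then p.1 else 0) + (if p.1 * s < x then p.1 else 0) := by
      intro p hp
      have hr0 : 0 < p.1 := hp.1.1
      have hu0 : 0 < p.2 := hp.2.1
      have hnn1 : (0:ℝ) ≤ if c * (p.1 * p.2) < x then p.1 else 0 := by
        split
        · exact hr0.le
        · exact le_refl 0
      have hnn2 : (0:ℝ) ≤ if p.1 * s < x then p.1 else 0 := by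
        split
        · exact hr0.le
        · exact le_refl 0
      by_cases h : p.1 * Real.sin p.2 < x
      · rcases le_or_gt p.2 δ with hud | hud
        · have h3 := Real.sin_gt_sub_cube hu0
          have hcube : p.2 ^ 3 ≤ p.2 * δ ^ 2 := by
            nlinarith [mul_nonneg (mul_nonneg (sub_nonneg.2 hud)
              (by linarith : (0:ℝ) ≤ δ + p.2)) hu0.le]
          have hsin : c * p.2 ≤ Real.sin p.2 := by
            rw [hcδ]; nlinarith
          have h1 : c * (p.1 * p.2) < x := by
            nlinarith [mul_nonneg hr0.le (sub_nonneg.2 hsin)]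
          rw [if_pos h, if_pos h1]
          exact le_add_of_nonneg_right hnn2
        · have hsin : s ≤ Real.sin p.2 := by
            rw [hsδ]
            apply Real.sin_le_sin_of_le_of_le_pi_div_two
            · linarith [Real.pi_pos]
            · exact le_of_lt (lt_of_lt_of_le hp.2.2 hu2)
            · exact hud.le
          have h2 : p.1 * s < x := by
            nlinarith [mul_nonneg hr0.le (sub_nonneg.2 hsin)]
          rw [if_pos h, if_pos h2]
          exact le_add_of_nonneg_left hnn1
      · rw [if_neg h]
        exact add_nonneg hnn1 hnn2
    have hle : (∫ p in Set.Ioo 0 C ×ˢ Set.Ioo 0 u₀, (if p.1 * Real.sin p.2 < x then p.1 else 0))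
        ≤ (∫ p in Set.Ioo 0 C ×ˢ Set.Ioo 0 u₀, (if c * (p.1 * p.2) < x then p.1 else 0))
          + ∫ p in Set.Ioo 0 C ×ˢ Set.Ioo 0 u₀, (if p.1 * s < x then p.1 else 0) := by
      calc (∫ p in Set.Ioo 0 C ×ˢ Set.Ioo 0 u₀, (if p.1 * Real.sin p.2 < x then p.1 else 0))
          ≤ ∫ p in Set.Ioo 0 C ×ˢ Set.Ioo 0 u₀,
              ((if c * (p.1 * p.2) < x then p.1 else 0) + (if p.1 * s < x then p.1 else 0)) :=
            setIntegral_mono_on (hmain_int x) (hint1.add hint2) hmB hpt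
        _ = _ := integral_add hint1 hint2
    rw [hF1] at hle
    have htot : (∫ p in Set.Ioo 0 C ×ˢ Set.Ioo 0 u₀, (if p.1 * Real.sin p.2 < x then p.1 else 0))
        ≤ x * C / c + u₀ * x ^ 2 / s ^ 2 := by
      have h1 : 0 ≤ x ^ 2 / (2 * c ^ 2 * u₀) := by positivity
      have h2 : u₀ * (x / s) ^ 2 = u₀ * x ^ 2 / s ^ 2 := by
        field_simp
      linarith [hle, hF2]
    have hmul : x⁻¹ * (∫ p in Set.Ioo 0 C ×ˢ Set.Ioo 0 u₀,
        (if p.1 * Real.sin p.2 < x then p.1 else 0))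
        ≤ C / c + u₀ * x / s ^ 2 := by
      have hh := mul_le_mul_of_nonneg_left htot (inv_nonneg.2 hx0.le)
      rw [show x⁻¹ * (x * C / c + u₀ * x ^ 2 / s ^ 2) = C / c + u₀ * x / s ^ 2 by
        field_simp] at hh
      exact hh
    have hxu : x < (b - C / c) * s ^ 2 / u₀ := hxη.trans_le (min_le_right _ _)
    have hfin : C / c + u₀ * x / s ^ 2 < b := by
      rw [lt_div_iff₀ hu] at hxu
      have : u₀ * x / s ^ 2 < b - C / c := by
        rw [div_lt_iff₀ (by positivity)]
        nlinarith
      linarith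
    exact lt_of_le_of_lt hmul hfin
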